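/- arXiv:1601.01041 — 2 statements merged into one kernel-verified Lean document; each statement's English description precedes it below -/
import Mathlib

section
/- No infinite connected graph is a forest graph: if G is connected and infinite, there is no graph H with F(H) isomorphic to G. -/
open Cardinal

variable {V : Type*}

/-- `F` is a maximal forest of `G`: an acyclic subgraph of `G` maximal among
acyclic subgraphs of `G` under inclusion. -/
def IsMaximalForest (G F : SimpleGraph V) : Prop :=
  F ≤ G ∧ F.IsAcyclic ∧ ∀ F' : SimpleGraph V, F' ≤ G → F'.IsAcyclic → F ≤ F' → F' = F

/-- The forest graph of `G`: vertices are the maximal forests of `G`,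
two adjacent iff they differ by exactly one edge. -/
def forestGraph (G : SimpleGraph V) :
    SimpleGraph {F : SimpleGraph V // IsMaximalForest G F} where
  Adj F₁ F₂ := (F₁.1.edgeSet \ F₂.1.edgeSet).encard = 1 ∧
               (F₂.1.edgeSet \ F₁.1.edgeSet).encard = 1
  symm := ⟨fun F₁ F₂ h => ⟨h.2, h.1⟩⟩
  loopless := ⟨fun F h => by simp at h⟩

/-- The set of cycles of `G`, each cycle identified with its edge set. -/
def cycleSet (G : SimpleGraph V) : Set (Set (Sym2 V)) :=
  {s | ∃ (v : V) (c : G.Walk v v), c.IsCycle ∧ s = {e | e ∈ c.edges}}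

/-! Fix a maximal forest `F₀` of `H`; every maximal forest in the component of `F₀` in `F(H)`
has only finitely many edges outside `F₀`. If `H` has infinitely many edges outside `F₀`, a
maximal forest of those edges is infinite and extends to a maximal forest of `H` with
infinitely many edges outside `F₀`, so `F(H)` is disconnected. Otherwise all but finitely many
edges of `H` are bridges: an edge of `F₀` lying on a cycle of `H` lies on the fundamental cycle
of one of the finitely many edges outside `F₀`. Bridges lie in every maximal forest, so a
maximal forest is determined by its trace on a finite set of edges, and `F(H)` is finite. -/

open SimpleGraph

lemma Set.Finite.preimage_sym2_mk {α : Type*} {s : Set (Sym2 α)} (hs : s.Finite) :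
    (Sym2.mk.uncurry ⁻¹' s).Finite := by
  refine hs.preimage' fun z _ => ?_
  induction z using Sym2.ind with
  | _ a b =>
    refine (Set.toFinite {(a, b), (b, a)}).subset fun p hp => ?_
    rcases Sym2.eq_iff.mp hp with ⟨h₁, h₂⟩ | ⟨h₁, h₂⟩ <;> simp [Prod.ext_iff, h₁, h₂]

namespace SimpleGraph

lemma edgeSet_finite_iff_support_finite {G : SimpleGraph V} :
    G.edgeSet.Finite ↔ G.support.Finite := by
  refine ⟨fun h => (h.preimage_sym2_mk.image Prod.fst).subset fun v hv => ?_, fun h => ?_⟩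
  · obtain ⟨w, hvw⟩ := hv
    exact ⟨(v, w), hvw, rfl⟩
  · refine (Set.sym2_eq_mk_image (s := G.support) ▸ (h.prod h).image _).subset ?_
    exact edgeSet_subset_sym2_iff.mpr subset_rfl

lemma reachable_le_of_adj_le_reachable {G G' : SimpleGraph V} (h : G.Adj ≤ G'.Reachable) :
    G.Reachable ≤ G'.Reachable := by
  simp only [reachable_eq_reflTransGen] at h ⊢
  exact Relation.reflTransGen_closed h

lemma finite_setOf_not_reachable_deleteEdges {G : SimpleGraph V} {u v : V}
    (h : G.Reachable u v) : {e | ¬(G.deleteEdges {e}).Reachable u v}.Finite := by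
  obtain ⟨p⟩ := h
  exact p.edges.finite_toSet.subset fun _ he => p.mem_edges_of_not_reachable_deleteEdges he

lemma exists_mem_forall_mem_edges_of_isChain {c : Set (SimpleGraph V)} (hc : IsChain (· ≤ ·) c)
    (hne : c.Nonempty) {u v : V} (p : (sSup c).Walk u v) :
    ∃ G ∈ c, ∀ e ∈ p.edges, e ∈ G.edgeSet := by
  induction p with
  | nil => exact ⟨_, hne.some_mem, by simp⟩
  | cons h q ih =>
    obtain ⟨G₁, hG₁, hadj⟩ := sSup_adj.mp h
    obtain ⟨G₂, hG₂, hq⟩ := ih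
    obtain ⟨G₃, hG₃, h₁₃, h₂₃⟩ := hc.directedOn G₁ hG₁ G₂ hG₂
    refine ⟨G₃, hG₃, ?_⟩
    simp only [Walk.edges_cons, List.mem_cons, forall_eq_or_imp]
    exact ⟨h₁₃ hadj, fun e he => edgeSet_mono h₂₃ (hq e he)⟩

lemma isAcyclic_sSup_of_isChain {c : Set (SimpleGraph V)} (hc : IsChain (· ≤ ·) c)
    (hne : c.Nonempty) (h : ∀ G ∈ c, G.IsAcyclic) : (sSup c).IsAcyclic := fun _ p hp => by
  obtain ⟨G, hG, hpG⟩ := exists_mem_forall_mem_edges_of_isChain hc hne p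
  exact h G hG _ (hp.transfer hpG)

end SimpleGraph

section MaximalForest

variable {H F : SimpleGraph V}

lemma isMaximalForest_iff_maximal :
    IsMaximalForest H F ↔ Maximal (fun F ↦ F ≤ H ∧ F.IsAcyclic) F :=
  ⟨fun hF => ⟨⟨hF.1, hF.2.1⟩, fun F' hF' hle => (hF.2.2 F' hF'.1 hF'.2 hle).le⟩,
    fun hF => ⟨hF.1.1, hF.1.2, fun _ hH hF' hle => le_antisymm (hF.2 ⟨hH, hF'⟩ hle) hle⟩⟩

lemma SimpleGraph.IsAcyclic.exists_isMaximalForest_ge {S : SimpleGraph V} (hS : S.IsAcyclic)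
    (hSH : S ≤ H) : ∃ F, IsMaximalForest H F ∧ S ≤ F := by
  obtain ⟨F, hSF, hF⟩ := zorn_le_nonempty₀ {F | F ≤ H ∧ F.IsAcyclic}
    (fun c hc hchain G hG => ⟨sSup c, ⟨sSup_le fun F hF => (hc hF).1,
      isAcyclic_sSup_of_isChain hchain ⟨G, hG⟩ fun F hF => (hc hF).2⟩, fun _ => le_sSup⟩)
    S ⟨hSH, hS⟩
  exact ⟨F, isMaximalForest_iff_maximal.mpr hF, hSF⟩

namespace IsMaximalForest

lemma reachable_eq (hF : IsMaximalForest H F) : F.Reachable = H.Reachable :=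
  reachable_eq_of_maximal_isAcyclic F (isMaximalForest_iff_maximal.mp hF)

lemma reachable_of_adj (hF : IsMaximalForest H F) {u v : V} (h : H.Adj u v) :
    F.Reachable u v :=
  hF.reachable_eq ▸ h.reachable

lemma support_eq (hF : IsMaximalForest H F) : F.support = H.support := by
  refine (support_mono hF.1).antisymm fun v ⟨w, hvw⟩ => ?_
  exact mem_support_of_reachable hvw.ne (hF.reachable_of_adj hvw)

lemma edgeSet_finite_iff (hF : IsMaximalForest H F) : F.edgeSet.Finite ↔ H.edgeSet.Finite := by
  rw [edgeSet_finite_iff_support_finite, edgeSet_finite_iff_support_finite, hF.support_eq]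

lemma mem_edgeSet_of_isBridge (hF : IsMaximalForest H F) {e : Sym2 V} (he : e ∈ H.edgeSet)
    (hb : H.IsBridge e) : e ∈ F.edgeSet := by
  induction e using Sym2.ind with
  | _ u v =>
    by_contra heF
    refine isBridge_iff.mp hb ((hF.reachable_of_adj he).mono fun x y hxy => ?_)
    exact deleteEdges_adj.mpr ⟨hF.1 hxy, fun h => heF (h ▸ hxy)⟩

lemma finite_setOf_not_isBridge (hF : IsMaximalForest H F)
    (hK : (H.edgeSet \ F.edgeSet).Finite) : {e ∈ H.edgeSet | ¬H.IsBridge e}.Finite := by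
  refine (hK.union (hK.preimage_sym2_mk.biUnion fun p hp =>
    finite_setOf_not_reachable_deleteEdges (hF.reachable_of_adj hp.1))).subset ?_
  rintro e ⟨heH, hnb⟩
  induction e using Sym2.ind with
  | _ u v =>
    by_cases heF : s(u, v) ∈ F.edgeSet
    · refine Or.inr (Set.mem_iUnion₂.mpr ?_)
      by_contra! hsep
      -- Then `F` minus `s(u, v)` connects the ends of every edge of `H` minus `s(u, v)`,
      -- hence connects `u` and `v`; but `s(u, v)` is a bridge of the forest `F`.
      refine isAcyclic_iff_forall_isBridge.mp hF.2.1 heF ?_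
      refine reachable_le_of_adj_le_reachable (fun x y hxy => ?_) u v (not_not.mp hnb)
      obtain ⟨hxyH, hxye⟩ := deleteEdges_adj.mp hxy
      by_cases hxyF : F.Adj x y
      · exact (deleteEdges_adj.mpr ⟨hxyF, hxye⟩).reachable
      · exact not_not.mp (hsep (x, y) ⟨hxyH, hxyF⟩)
    · exact Or.inl ⟨heH, heF⟩

end IsMaximalForest

lemma exists_isMaximalForest_infinite_sdiff (s : Set (Sym2 V)) (hs : (H.edgeSet \ s).Infinite) :
    ∃ F, IsMaximalForest H F ∧ (F.edgeSet \ s).Infinite := by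
  obtain ⟨F₁, hF₁, -⟩ := isAcyclic_bot.exists_isMaximalForest_ge (H := H.deleteEdges s) bot_le
  obtain ⟨F₂, hF₂, h₁₂⟩ := hF₁.2.1.exists_isMaximalForest_ge (hF₁.1.trans (deleteEdges_le _))
  have hF₁s : F₁.edgeSet ⊆ H.edgeSet \ s := edgeSet_deleteEdges s ▸ edgeSet_mono hF₁.1
  have hF₁inf : F₁.edgeSet.Infinite := fun h =>
    hs (edgeSet_deleteEdges s ▸ hF₁.edgeSet_finite_iff.mp h)
  exact ⟨F₂, hF₂, hF₁inf.mono fun e he => ⟨edgeSet_mono h₁₂ he, (hF₁s he).2⟩⟩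

lemma finite_of_finite_setOf_not_isBridge (hN : {e ∈ H.edgeSet | ¬H.IsBridge e}.Finite) :
    Finite {F // IsMaximalForest H F} := by
  set N := {e ∈ H.edgeSet | ¬H.IsBridge e}
  have hdet (F : {F // IsMaximalForest H F}) : F.1.edgeSet = F.1.edgeSet ∩ N ∪ H.edgeSet \ N := by
    ext e
    constructor
    · intro he
      by_cases heN : e ∈ N
      · exact Or.inl ⟨he, heN⟩
      · exact Or.inr ⟨edgeSet_mono F.2.1 he, heN⟩
    · rintro (⟨he, -⟩ | ⟨heH, heN⟩)
      · exact he
      · exact F.2.mem_edgeSet_of_isBridge heH (not_not.mp fun hb => heN ⟨heH, hb⟩)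
  have : Finite {t | t ⊆ N} := hN.finite_subsets.to_subtype
  refine Finite.of_injective (β := {t | t ⊆ N})
    (fun F => ⟨F.1.edgeSet ∩ N, Set.inter_subset_right⟩) fun F F' h => ?_
  have hN : F.1.edgeSet ∩ N = F'.1.edgeSet ∩ N := congrArg Subtype.val h
  exact Subtype.ext (edgeSet_inj.mp (by rw [hdet F, hdet F', hN]))

lemma finite_sdiff_of_forestGraph_reachable {F₁ F₂ : {F // IsMaximalForest H F}}
    (h : (forestGraph H).Reachable F₁ F₂) : (F₂.1.edgeSet \ F₁.1.edgeSet).Finite := by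
  rw [reachable_iff_reflTransGen] at h
  induction h with
  | refl => simp
  | tail _ hadj ih =>
    exact ((Set.finite_of_encard_eq_coe hadj.2).union ih).subset (sdiff_triangle _ _ _)

theorem finite_of_forestGraph_connected (h : (forestGraph H).Connected) :
    Finite {F // IsMaximalForest H F} := by
  obtain ⟨F₀⟩ := h.nonempty
  by_cases hK : (H.edgeSet \ F₀.1.edgeSet).Finite
  · exact finite_of_finite_setOf_not_isBridge (F₀.2.finite_setOf_not_isBridge hK)
  · obtain ⟨F, hF, hinf⟩ := exists_isMaximalForest_infinite_sdiff _ hK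
    exact absurd (finite_sdiff_of_forestGraph_reachable (h.preconnected F₀ ⟨F, hF⟩)) hinf

end MaximalForest

/-- No infinite connected graph is a forest graph. -/
theorem infinite_connected_no_root {W : Type*} (G : SimpleGraph V)
    (hconn : G.Connected) (hinf : Infinite V) (H : SimpleGraph W) :
    ¬ Nonempty (forestGraph H ≃g G) := by
  rintro ⟨e⟩
  have := finite_of_forestGraph_connected (e.connected_iff.mpr hconn)
  exact (Finite.of_equiv _ e.toEquiv).false
end

section
/- No bipartite graph with at least 2 vertices is a forest graph: if G is bipartite and |V(G)| ≥ 2, there is no graph H with F(H) isomorphic to G. -/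
open Cardinal

variable {V : Type*}

/-!
Maximal forests of `H` are exactly the acyclic subgraphs with the same reachability relation as
`H`. If `H` is acyclic it is its own unique maximal forest, so `F(H)` has one vertex. Otherwise
some edge `e` of `H` lies outside a maximal forest `F`, and `F + e` contains a cycle. Deleting any
edge of that cycle from `F + e` again leaves a maximal forest, and two such forests differ in
exactly one edge each way, so three edges of the cycle give a triangle in `F(H)`.
-/

namespace SimpleGraph

variable {G K : SimpleGraph V}

lemma reachable_le_of_forall_adj {G' : SimpleGraph V}
    (h : ∀ ⦃u v⦄, G'.Adj u v → G.Reachable u v) : G'.Reachable ≤ G.Reachable := by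
  intro u v huv
  rw [reachable_iff_reflTransGen] at huv
  induction huv with
  | refl => rfl
  | tail _ hab ih => exact ih.trans (h hab)

lemma reachable_sup_edge_of_reachable {a b : V} (h : K.Reachable a b) :
    (K ⊔ edge a b).Reachable = K.Reachable := by
  refine le_antisymm (reachable_le_of_forall_adj fun u v huv => ?_) (Reachable.mono' le_sup_left)
  rcases huv with huv | huv
  · exact huv.reachable
  · obtain ⟨⟨rfl, rfl⟩ | ⟨rfl, rfl⟩, -⟩ := (edge_adj ..).mp huv
    exacts [h, h.symm]

lemma deleteEdges_sup_edge {x y : V} (h : G.Adj x y) :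
    G.deleteEdges {s(x, y)} ⊔ edge x y = G := by
  ext u v
  simp only [sup_adj, deleteEdges_adj, edge_adj, Set.mem_singleton_iff, Sym2.eq_iff]
  grind [G.adj_symm, G.ne_of_adj]

lemma reachable_deleteEdges_of_mem_edges_isCycle {x y w : V} {c : G.Walk w w} (hc : c.IsCycle)
    (hxy : s(x, y) ∈ c.edges) : (G.deleteEdges {s(x, y)}).Reachable = G.Reachable := by
  obtain ⟨hadj, hreach⟩ := adj_and_reachable_delete_edges_iff_exists_cycle.mpr ⟨w, c, hc, hxy⟩
  conv_rhs => rw [← deleteEdges_sup_edge hadj]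
  exact (reachable_sup_edge_of_reachable hreach).symm

lemma Walk.IsCycle.exists_three_edges {w : V} {c : G.Walk w w} (hc : c.IsCycle) :
    ∃ e₁ ∈ c.edges, ∃ e₂ ∈ c.edges, ∃ e₃ ∈ c.edges, e₁ ≠ e₂ ∧ e₁ ≠ e₃ ∧ e₂ ≠ e₃ := by
  have hlen := hc.three_le_length
  have hnodup := hc.edges_nodup
  rw [← Walk.length_edges] at hlen
  match c.edges, hlen, hnodup with
  | e₁ :: e₂ :: e₃ :: l, _, hnodup =>
    simp only [List.nodup_cons, List.mem_cons, not_or] at hnodup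
    exact ⟨e₁, by simp, e₂, by simp, e₃, by simp, hnodup.1.1, hnodup.1.2.1, hnodup.2.1.1⟩

end SimpleGraph

open SimpleGraph

variable {H F G : SimpleGraph V}

lemma isMaximalForest_iff :
    IsMaximalForest H F ↔ F ≤ H ∧ F.IsAcyclic ∧ F.Reachable = H.Reachable := by
  refine ⟨fun ⟨hle, hF, hmax⟩ => ⟨hle, hF, ?_⟩, fun ⟨hle, hF, hreach⟩ => ⟨hle, hF, ?_⟩⟩
  · refine (maximal_isAcyclic_iff_reachable_eq hle hF).mp ⟨⟨hle, hF⟩, fun F' hF' hFF' => ?_⟩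
    exact (hmax F' hF'.1 hF'.2 hFF').le
  · have hmax := (maximal_isAcyclic_iff_reachable_eq hle hF).mpr hreach
    exact fun F' hF'H hF' hFF' => le_antisymm (hmax.2 ⟨hF'H, hF'⟩ hFF') hFF'

lemma IsMaximalForest.eq_of_isAcyclic (hF : IsMaximalForest H F) (hH : H.IsAcyclic) : F = H :=
  (hF.2.2 H le_rfl hH hF.1).symm

lemma IsMaximalForest.deleteEdges_of_mem_edges_isCycle {e : Sym2 V} {x y w : V} (hGH : G ≤ H)
    (hF : IsMaximalForest H (G.deleteEdges {e})) {c : G.Walk w w} (hc : c.IsCycle)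
    (hxy : s(x, y) ∈ c.edges) : IsMaximalForest H (G.deleteEdges {s(x, y)}) := by
  obtain ⟨-, hFacyc, hFreach⟩ := isMaximalForest_iff.mp hF
  have hGreach : G.Reachable = H.Reachable :=
    le_antisymm (Reachable.mono' hGH) (hFreach ▸ Reachable.mono' (deleteEdges_le _))
  have hreach := reachable_deleteEdges_of_mem_edges_isCycle hc hxy
  refine isMaximalForest_iff.mpr ⟨(deleteEdges_le _).trans hGH, ?_, hreach.trans hGreach⟩
  induction e with | h a b => ?_
  by_cases hef : s(a, b) = s(x, y)
  · exact hef ▸ hFacyc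
  have hab : G.Adj a b := by
    by_contra hab
    rw [deleteEdges_eq_self.mpr (by simpa using hab)] at hFacyc
    exact hFacyc c hc
  have hdecomp : G.deleteEdges {s(x, y)} =
      (G.deleteEdges {s(a, b)}).deleteEdges {s(x, y)} ⊔ edge a b := by
    conv_lhs => rw [← deleteEdges_sup_edge (G := G.deleteEdges {s(x, y)}) (x := a) (y := b)
      (by simp [hab, hef])]
    rw [deleteEdges_deleteEdges, deleteEdges_deleteEdges, Set.union_comm]
  rw [hdecomp]
  -- if `a`, `b` were joined without `s(a, b)` and `s(x, y)`, then so would be `x`, `y`, and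
  -- `s(x, y)` would not be a bridge of the forest `G.deleteEdges {s(a, b)}`
  refine (hFacyc.anti (deleteEdges_le _)).sup_edge_of_not_reachable fun hK => ?_
  have hxyF : (G.deleteEdges {s(a, b)}).Adj x y := by
    simpa [Ne.symm hef] using c.adj_of_mem_edges hxy
  refine isAcyclic_iff_forall_adj_isBridge.mp hFacyc hxyF ?_
  rw [← reachable_sup_edge_of_reachable hK, ← hdecomp, hreach]
  exact (c.adj_of_mem_edges hxy).reachable

lemma forestGraph_adj_deleteEdges {e f : Sym2 V} (he : e ∈ G.edgeSet) (hf : f ∈ G.edgeSet)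
    (hef : e ≠ f) (hFe : IsMaximalForest H (G.deleteEdges {e}))
    (hFf : IsMaximalForest H (G.deleteEdges {f})) : (forestGraph H).Adj ⟨_, hFe⟩ ⟨_, hFf⟩ := by
  have hdiff : ∀ {a b}, a ∈ G.edgeSet → a ≠ b →
      ((G.deleteEdges {b}).edgeSet \ (G.deleteEdges {a}).edgeSet) = {a} := by
    intro a b ha hab
    ext g
    simp only [edgeSet_deleteEdges, Set.mem_sdiff, Set.mem_singleton_iff]
    grind
  exact ⟨by rw [hdiff hf (Ne.symm hef), Set.encard_singleton],
    by rw [hdiff he hef, Set.encard_singleton]⟩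

lemma exists_isMaximalForest_deleteEdges_of_not_isAcyclic (hH : ¬H.IsAcyclic) :
    ∃ G ≤ H, ∃ e, IsMaximalForest H (G.deleteEdges {e}) ∧ ¬G.IsAcyclic := by
  obtain ⟨F, hFH, hF, hFreach⟩ := H.exists_isAcyclic_reachable_eq_le
  obtain ⟨u, v, huv, hFuv⟩ : ∃ u v, H.Adj u v ∧ ¬F.Adj u v := by
    by_contra! h
    exact hH (hF.anti fun u v huv => h u v huv)
  refine ⟨F ⊔ edge u v, sup_le hFH ((edge_le_iff (G := H)).mpr (Or.inr huv)), s(u, v), ?_, ?_⟩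
  · rw [deleteEdges_sup, deleteEdges_edge (Set.mem_singleton _), sup_bot_eq,
      deleteEdges_eq_self.mpr (by simpa using hFuv)]
    exact isMaximalForest_iff.mpr ⟨hFH, hF, hFreach⟩
  · rw [isAcyclic_sup_fromEdgeSet_iff]
    exact fun ⟨_, h⟩ => (h (hFreach ▸ huv.reachable)).elim huv.ne hFuv

lemma not_cliqueFree_three_forestGraph (hH : ¬H.IsAcyclic) : ¬(forestGraph H).CliqueFree 3 := by
  classical
  obtain ⟨G, hGH, e, hF, hG⟩ := exists_isMaximalForest_deleteEdges_of_not_isAcyclic hH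
  obtain ⟨w, c, hc⟩ : ∃ w, ∃ c : G.Walk w w, c.IsCycle := by
    simpa [IsAcyclic] using hG
  obtain ⟨e₁, he₁, e₂, he₂, e₃, he₃, h₁₂, h₁₃, h₂₃⟩ := hc.exists_three_edges
  have hmax : ∀ f ∈ c.edges, IsMaximalForest H (G.deleteEdges {f}) := by
    intro f hf
    induction f with | h x y => exact hF.deleteEdges_of_mem_edges_isCycle hGH hc hf
  have hadj : ∀ {f g} (hf : f ∈ c.edges) (hg : g ∈ c.edges), f ≠ g →
      (forestGraph H).Adj ⟨_, hmax f hf⟩ ⟨_, hmax g hg⟩ := fun hf hg hfg =>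
    forestGraph_adj_deleteEdges (c.edges_subset_edgeSet hf) (c.edges_subset_edgeSet hg) hfg _ _
  exact fun h => h _ (is3Clique_triple_iff.mpr
    ⟨hadj he₁ he₂ h₁₂, hadj he₁ he₃ h₁₃, hadj he₂ he₃ h₂₃⟩)

/-- No bipartite graph with at least two vertices is a forest graph. -/
theorem bipartite_no_root {W : Type*} (G : SimpleGraph V)
    (hbip : G.Colorable 2) (hcard : ∃ v w : V, v ≠ w) (H : SimpleGraph W) :
    ¬ Nonempty (forestGraph H ≃g G) := by
  rintro ⟨φ⟩
  by_cases hH : H.IsAcyclic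
  · obtain ⟨v, w, hvw⟩ := hcard
    refine hvw (φ.symm.injective (Subtype.ext ?_))
    rw [(φ.symm v).2.eq_of_isAcyclic hH, (φ.symm w).2.eq_of_isAcyclic hH]
  · exact not_cliqueFree_three_forestGraph hH ((hbip.of_hom φ.toHom).cliqueFree (by norm_num))
end
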